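/- Let Ω be a second countable Hausdorff space, T a positive strong Feller kernel operator on B_b(Ω), and μ a strictly positive, finite, T-invariant Borel measure. Then for every x ∈ Ω there exists a finite positive Borel measure μ_x on Ω such that (T²f)(x) = ∫_Ω f dμ_x for all f ∈ B_b(Ω). -/

import Mathlib

/-
For fixed `x`, `A ↦ (T² 𝟙_A)(x)` is a finitely additive positive set function; the point is
countable additivity. Average `T² 𝟙_A` over a shrinking basis of open neighbourhoods `O i` of `x`
(they have positive measure since `μ` is strictly positive). By invariance of `μ` these averages
are bounded by `μ A / μ (O i)`, and by the strong Feller property they converge to `(T² 𝟙_A)(x)`.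
The Vitali–Hahn–Saks theorem then makes the limit uniformly `μ`-continuous, hence countably
additive, so it is a finite measure `μₓ`. Both `f ↦ (T² f)(x)` and `f ↦ ∫ f dμₓ` are positive
linear functionals agreeing on indicators, hence on simple functions, hence on all bounded
measurable functions, which are uniform limits of simple functions.
-/

open MeasureTheory Filter Topology Set

/-- `Bb f`: `f` is a bounded Borel measurable real-valued function. -/
def Bb {Ω : Type*} [MeasurableSpace Ω] (f : Ω → ℝ) : Prop :=
  Measurable f ∧ ∃ C : ℝ, ∀ x, |f x| ≤ C

open scoped symmDiff ENNReal

lemma Set.symmDiff_limsup_subset {α : Type*} (u : ℕ → Set α) (N : ℕ) :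
    u N ∆ limsup u atTop ⊆ ⋃ k, u (N + k) ∆ u (N + k + 1) := by
  intro y hy
  by_contra hy'
  simp only [mem_iUnion, not_exists, mem_symmDiff, not_or, not_and, not_not] at hy'
  have hconst : ∀ k, (y ∈ u (N + k) ↔ y ∈ u N) := by
    intro k
    induction k with
    | zero => rfl
    | succ k ih => rw [← add_assoc, ← ih]; exact ⟨(hy' k).2, (hy' k).1⟩
  have hev : ∀ᶠ n in atTop, (y ∈ u n ↔ y ∈ u N) :=
    (eventually_ge_atTop N).mono fun n hn => by
      simpa [Nat.add_sub_cancel' hn] using hconst (n - N)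
  have hlim : y ∈ limsup u atTop ↔ y ∈ u N := by
    rw [mem_limsup_iff_frequently_mem]
    exact ⟨fun h => (h.and_eventually hev).exists.elim fun n hn => hn.2.mp hn.1,
      fun h => (hev.mono fun n hn => hn.mpr h).frequently⟩
  rw [mem_symmDiff] at hy
  tauto

lemma exists_isOpen_forall_abs_sub_le_of_cauchySeq {X : Type*} [TopologicalSpace X]
    [BaireSpace X] [Nonempty X] {F : ℕ → X → ℝ} (hF : ∀ i, Continuous (F i))
    (hF_cauchy : ∀ x, CauchySeq (F · x)) {ε : ℝ} (hε : 0 < ε) :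
    ∃ m, ∃ U : Set X, IsOpen U ∧ U.Nonempty ∧ ∀ x ∈ U, ∀ i ≥ m, ∀ j ≥ m, |F i x - F j x| ≤ ε := by
  let E : ℕ → Set X := fun m => {x | ∀ i ≥ m, ∀ j ≥ m, |F i x - F j x| ≤ ε}
  have hE : ∀ m, IsClosed (E m) := fun m => by
    simp only [E, ofPred_forall]
    exact isClosed_iInter fun i => isClosed_iInter fun _ => isClosed_iInter fun j =>
      isClosed_iInter fun _ => isClosed_le ((hF i).sub (hF j)).abs continuous_const
  have hE_cover : ⋃ m, E m = univ := eq_univ_of_forall fun x => by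
    obtain ⟨m, hm⟩ := Metric.cauchySeq_iff.mp (hF_cauchy x) ε hε
    exact mem_iUnion.mpr ⟨m, fun i hi j hj => (hm i hi j hj).le⟩
  obtain ⟨m, hm⟩ := nonempty_interior_of_iUnion_of_closed hE hE_cover
  exact ⟨m, interior (E m), isOpen_interior, hm, fun x hx => interior_subset hx⟩

section

variable {Ω : Type*} [MeasurableSpace Ω]

lemma MeasureTheory.MeasuredSets.measurableSet {μ : Measure Ω} (s : MeasuredSets μ) :
    MeasurableSet (s : Set Ω) :=
  s.2

instance MeasureTheory.MeasuredSets.completeSpace {μ : Measure Ω} :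
    CompleteSpace (MeasuredSets μ) := by
  refine EMetric.complete_of_convergent_controlled_sequences (fun n => 2⁻¹ ^ n)
    (fun n => ENNReal.pow_pos (by norm_num) n) fun u hu => ?_
  let A : MeasuredSets μ :=
    ⟨limsup (fun n => (u n : Set Ω)) atTop,
      MeasurableSet.measurableSet_limsup fun n => (u n).measurableSet⟩
  have hdist : ∀ N, edist (u N) A ≤ 2⁻¹ ^ N * 2 := fun N => calc
    edist (u N) A ≤ μ (⋃ k, (u (N + k) : Set Ω) ∆ u (N + k + 1)) :=
        measure_mono (symmDiff_limsup_subset (fun n => (u n : Set Ω)) N)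
    _ ≤ ∑' k, 2⁻¹ ^ (N + k) := (measure_iUnion_le _).trans <|
        ENNReal.tsum_le_tsum fun k => (hu (N + k) _ _ le_rfl (by omega)).le
    _ = 2⁻¹ ^ N * 2 := by
        simp [pow_add, ENNReal.tsum_mul_left, ENNReal.tsum_geometric, ENNReal.one_sub_inv_two]
  have hlim : Tendsto (fun N : ℕ => (2⁻¹ : ℝ≥0∞) ^ N * 2) atTop (𝓝 0) := by
    simpa using ENNReal.Tendsto.mul_const (ENNReal.tendsto_pow_atTop_nhds_zero_of_lt_one
      (by norm_num : (2⁻¹ : ℝ≥0∞) < 1)) (.inr ENNReal.ofNat_ne_top)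
  exact ⟨A, tendsto_iff_edist_tendsto_0.mpr <|
    tendsto_of_tendsto_of_tendsto_of_le_of_le tendsto_const_nhds hlim (fun _ => zero_le) hdist⟩

def MeasurableSet.toMeasuredSets {s : Set Ω} (hs : MeasurableSet s) (μ : Measure Ω) :
    MeasuredSets μ :=
  ⟨s, hs⟩

@[simp]
lemma MeasurableSet.coe_toMeasuredSets {s : Set Ω} (hs : MeasurableSet s) (μ : Measure Ω) :
    (hs.toMeasuredSets μ : Set Ω) = s :=
  rfl

section VitaliHahnSaks

variable {μ : Measure Ω} [IsFiniteMeasure μ]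

lemma abs_sub_le_mul_measureReal_symmDiff {G : Set Ω → ℝ} {c : ℝ}
    (hG_add : ∀ s t, MeasurableSet s → MeasurableSet t → Disjoint s t → G (s ∪ t) = G s + G t)
    (hG_le : ∀ s, MeasurableSet s → |G s| ≤ c * μ.real s) {s t : Set Ω}
    (hs : MeasurableSet s) (ht : MeasurableSet t) :
    |G s - G t| ≤ c * μ.real (s ∆ t) := by
  have hsplit : ∀ {a b : Set Ω}, MeasurableSet a → MeasurableSet b → G a = G (a \ b) + G (a ∩ b) :=
    fun ha hb => by
      rw [← hG_add _ _ (ha.diff hb) (ha.inter hb) (disjoint_sdiff_inter), sdiff_union_inter]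
  rw [hsplit hs ht, hsplit ht hs, inter_comm t s, measureReal_symmDiff_eq hs ht, mul_add]
  calc |G (s \ t) + G (s ∩ t) - (G (t \ s) + G (s ∩ t))| = |G (s \ t) - G (t \ s)| := by ring_nf
    _ ≤ |G (s \ t)| + |G (t \ s)| := abs_sub _ _
    _ ≤ _ := add_le_add (hG_le _ (hs.diff ht)) (hG_le _ (ht.diff hs))

lemma continuous_of_abs_le_mul_measureReal {G : Set Ω → ℝ} {c : ℝ}
    (hG_add : ∀ s t, MeasurableSet s → MeasurableSet t → Disjoint s t → G (s ∪ t) = G s + G t)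
    (hG_le : ∀ s, MeasurableSet s → |G s| ≤ c * μ.real s) :
    Continuous (fun s : MeasuredSets μ => G s) := by
  refine (LipschitzWith.of_dist_le_mul (K := c.toNNReal) fun s t => ?_).continuous
  rw [Real.dist_eq, MeasuredSets.dist_def]
  exact (abs_sub_le_mul_measureReal_symmDiff hG_add hG_le s.measurableSet t.measurableSet).trans
    (mul_le_mul_of_nonneg_right (Real.le_coe_toNNReal c) measureReal_nonneg)

/- Vitali–Hahn–Saks: by Baire category in the complete space `MeasuredSets μ`, the `F i` are
uniformly Cauchy on some ball around `s₀`; writing a small set `D` as the difference of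
`s₀ ∪ D` and `s₀ \ D`, both in that ball, transfers the estimate to every small `D`. -/
theorem exists_forall_measureReal_lt_abs_le_of_tendsto {F : ℕ → Set Ω → ℝ} {m : Set Ω → ℝ}
    {c : ℕ → ℝ}
    (hF_add : ∀ i s t, MeasurableSet s → MeasurableSet t → Disjoint s t →
      F i (s ∪ t) = F i s + F i t)
    (hF_le : ∀ i s, MeasurableSet s → |F i s| ≤ c i * μ.real s)
    (hF_tendsto : ∀ s, MeasurableSet s → Tendsto (F · s) atTop (𝓝 (m s))) {ε : ℝ} (hε : 0 < ε) :
    ∃ δ > 0, ∀ s, MeasurableSet s → μ.real s < δ → |m s| ≤ ε := by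
  have hF_cont i := continuous_of_abs_le_mul_measureReal (hF_add i) (hF_le i)
  have : Nonempty (MeasuredSets μ) := ⟨MeasurableSet.empty.toMeasuredSets μ⟩
  obtain ⟨n, U, hU, ⟨s₀, hs₀⟩, hU_cauchy⟩ := exists_isOpen_forall_abs_sub_le_of_cauchySeq hF_cont
    (fun s => (hF_tendsto s s.measurableSet).cauchySeq) (by positivity : 0 < ε / 4)
  obtain ⟨r, hr, hball⟩ := Metric.isOpen_iff.mp hU s₀ hs₀
  have hF_empty : F n ∅ = 0 := by
    simpa using hF_add n ∅ ∅ .empty .empty (disjoint_empty _)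
  obtain ⟨δ, hδ, hFn_small⟩ := Metric.continuous_iff.mp (hF_cont n)
    (MeasurableSet.empty.toMeasuredSets μ) (ε / 2) (by positivity)
  refine ⟨min r δ, lt_min hr hδ, fun D hD hDδ => ?_⟩
  have hmem : ∀ t : MeasuredSets μ, (t : Set Ω) ∆ s₀ ⊆ D → t ∈ U := fun t ht =>
    hball <| (measureReal_mono ht).trans_lt (hDδ.trans_le (min_le_left _ _))
  have hunion := hU_cauchy ((s₀.measurableSet.union hD).toMeasuredSets μ) (hmem _ (by
    intro; simp only [MeasurableSet.coe_toMeasuredSets, mem_symmDiff, mem_union]; tauto))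
  have hdiff := hU_cauchy ((s₀.measurableSet.diff hD).toMeasuredSets μ) (hmem _ (by
    intro; simp only [MeasurableSet.coe_toMeasuredSets, mem_symmDiff, Set.mem_sdiff]; tauto))
  have hD_cauchy : ∀ i ≥ n, |F i D - F n D| ≤ ε / 2 := fun i hi => by
    have hsplit : ∀ j, F j (s₀ ∪ D) = F j (s₀ \ D) + F j D := fun j => by
      rw [← hF_add j _ _ (s₀.measurableSet.diff hD) hD disjoint_sdiff_left, sdiff_union_self]
    have h1 := hunion i hi n le_rfl
    have h2 := hdiff i hi n le_rfl
    simp only [MeasurableSet.coe_toMeasuredSets, hsplit] at h1 h2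
    calc |F i D - F n D| = |(F i (s₀ \ D) + F i D - (F n (s₀ \ D) + F n D)) -
        (F i (s₀ \ D) - F n (s₀ \ D))| := by ring_nf
      _ ≤ ε / 4 + ε / 4 := (abs_sub _ _).trans (add_le_add h1 h2)
      _ = ε / 2 := by ring
  have hm_near : |m D - F n D| ≤ ε / 2 :=
    le_of_tendsto (((hF_tendsto D hD).sub_const _).abs)
      (eventually_atTop.mpr ⟨n, hD_cauchy⟩)
  have hFn : |F n D| < ε / 2 := by
    have := hFn_small (hD.toMeasuredSets μ) (by
      rw [MeasuredSets.dist_def, MeasurableSet.coe_toMeasuredSets,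
        MeasurableSet.coe_toMeasuredSets, ← bot_eq_empty, symmDiff_bot]
      exact hDδ.trans_le (min_le_right _ _))
    simpa [Real.dist_eq, hF_empty] using this
  calc |m D| = |(m D - F n D) + F n D| := by ring_nf
    _ ≤ ε := (abs_add_le _ _).trans (by linarith)

end VitaliHahnSaks

lemma tendsto_of_forall_measureReal_lt_abs_le {μ : Measure Ω} [IsFiniteMeasure μ]
    {m : Set Ω → ℝ} (hm : ∀ ε > 0, ∃ δ > 0, ∀ s, MeasurableSet s → μ.real s < δ → |m s| ≤ ε)
    {s : ℕ → Set Ω} (hs : ∀ n, MeasurableSet (s n)) (hs_anti : Antitone s)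
    (hs_empty : ⋂ n, s n = ∅) :
    Tendsto (fun n => m (s n)) atTop (𝓝 0) := by
  have hμs : Tendsto (fun n => μ.real (s n)) atTop (𝓝 0) := by
    have := tendsto_measure_iInter_atTop (μ := μ) (fun n => (hs n).nullMeasurableSet) hs_anti
      ⟨0, measure_ne_top μ _⟩
    rw [hs_empty, measure_empty] at this
    exact (ENNReal.tendsto_toReal ENNReal.zero_ne_top).comp this
  refine Metric.tendsto_atTop.mpr fun ε hε => ?_
  obtain ⟨δ, hδ, hmδ⟩ := hm (ε / 2) (half_pos hε)
  obtain ⟨N, hN⟩ := (hμs.eventually (gt_mem_nhds hδ)).exists_forall_of_atTop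
  exact ⟨N, fun n hn => by
    rw [Real.dist_eq, sub_zero]
    exact (hmδ _ (hs n) (hN n hn)).trans_lt (half_lt_self hε)⟩

theorem exists_isFiniteMeasure_measureReal_eq {m : Set Ω → ℝ}
    (hm_nonneg : ∀ s, MeasurableSet s → 0 ≤ m s)
    (hm_add : ∀ s t, MeasurableSet s → MeasurableSet t → Disjoint s t → m (s ∪ t) = m s + m t)
    (hm_tendsto : ∀ ⦃s : ℕ → Set Ω⦄, (∀ n, MeasurableSet (s n)) → Antitone s →
      ⋂ n, s n = ∅ → Tendsto (fun n => m (s n)) atTop (𝓝 0)) :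
    ∃ ν : Measure Ω, IsFiniteMeasure ν ∧ ∀ s, MeasurableSet s → ν.real s = m s := by
  have hring : IsSetRing {s : Set Ω | MeasurableSet s} :=
    ⟨.empty, fun _ _ => .union, fun _ _ => .diff⟩
  have hm_empty : m ∅ = 0 := by
    simpa using hm_add ∅ ∅ .empty .empty (disjoint_empty _)
  let c := hring.addContent_of_union (fun s => ENNReal.ofReal (m s)) (by simp [hm_empty])
    fun hs ht hst => by
      rw [hm_add _ _ hs ht hst, ENNReal.ofReal_add (hm_nonneg _ hs) (hm_nonneg _ ht)]
  have hc : ∀ s, c s = ENNReal.ofReal (m s) := fun _ => rfl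
  let ν := Measure.ofMeasurable (fun s _ => c s) addContent_empty fun f hf hdisj =>
    addContent_iUnion_eq_sum_of_tendsto_zero hring c (fun _ _ => ENNReal.ofReal_ne_top)
      (fun s hs hanti hempty => by
        simpa [hc] using ENNReal.tendsto_ofReal (hm_tendsto hs hanti hempty))
      hf (.iUnion hf) hdisj
  have hν : ∀ s, MeasurableSet s → ν s = ENNReal.ofReal (m s) := fun s hs =>
    Measure.ofMeasurable_apply s hs
  refine ⟨ν, ⟨by simp [hν _ .univ]⟩, fun s hs => ?_⟩
  rw [measureReal_def, hν s hs, ENNReal.toReal_ofReal (hm_nonneg s hs)]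

namespace Bb

lemma const (c : ℝ) : Bb (fun _ : Ω => c) := ⟨measurable_const, |c|, fun _ => le_rfl⟩

lemma indicator_one {s : Set Ω} (hs : MeasurableSet s) : Bb (s.indicator 1) :=
  ⟨measurable_one.indicator hs, 1, fun y => by
    by_cases hy : y ∈ s <;> simp [hy]⟩

lemma add {f g : Ω → ℝ} (hf : Bb f) (hg : Bb g) : Bb (f + g) := by
  obtain ⟨hf, C, hC⟩ := hf
  obtain ⟨hg, D, hD⟩ := hg
  exact ⟨hf.add hg, C + D, fun y => (abs_add_le _ _).trans (add_le_add (hC y) (hD y))⟩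

lemma smul {f : Ω → ℝ} (c : ℝ) (hf : Bb f) : Bb (c • f) := by
  obtain ⟨hf, C, hC⟩ := hf
  refine ⟨hf.const_smul c, |c| * C, fun y => ?_⟩
  rw [Pi.smul_apply, smul_eq_mul, abs_mul]
  exact mul_le_mul_of_nonneg_left (hC y) (abs_nonneg c)

lemma sub {f g : Ω → ℝ} (hf : Bb f) (hg : Bb g) : Bb (f - g) := by
  simpa [sub_eq_add_neg] using hf.add (hg.smul (-1))

lemma integrable {f : Ω → ℝ} (hf : Bb f) (ν : Measure Ω) [IsFiniteMeasure ν] :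
    Integrable f ν := by
  obtain ⟨hm, C, hC⟩ := hf
  exact .of_bound hm.aestronglyMeasurable C (.of_forall hC)

end Bb

lemma MeasureTheory.SimpleFunc.bb (g : SimpleFunc Ω ℝ) : Bb g :=
  ⟨g.measurable, g.exists_forall_norm_le⟩

structure IsBbPositiveFunctional (φ : (Ω → ℝ) → ℝ) : Prop where
  map_add : ∀ f g, Bb f → Bb g → φ (f + g) = φ f + φ g
  map_smul : ∀ (c : ℝ) f, Bb f → φ (c • f) = c * φ f
  nonneg : ∀ f, Bb f → (∀ x, 0 ≤ f x) → 0 ≤ φ f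

structure IsBbPositiveOperator (T : (Ω → ℝ) → Ω → ℝ) : Prop where
  bb : ∀ f, Bb f → Bb (T f)
  map_add : ∀ f g, Bb f → Bb g → T (f + g) = T f + T g
  map_smul : ∀ (c : ℝ) f, Bb f → T (c • f) = c • T f
  nonneg : ∀ f, Bb f → (∀ x, 0 ≤ f x) → ∀ x, 0 ≤ T f x

lemma isBbPositiveFunctional_apply (x : Ω) : IsBbPositiveFunctional (fun f : Ω → ℝ => f x) :=
  ⟨fun _ _ _ _ => rfl, fun _ _ _ => rfl, fun _ _ hf => hf x⟩

lemma isBbPositiveFunctional_integral (ν : Measure Ω) [IsFiniteMeasure ν] :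
    IsBbPositiveFunctional (fun f : Ω → ℝ => ∫ y, f y ∂ν) where
  map_add _ _ hf hg := integral_add (hf.integrable ν) (hg.integrable ν)
  map_smul c f _ := integral_const_mul c f
  nonneg _ _ hf := integral_nonneg hf

lemma isBbPositiveFunctional_setAverage (μ : Measure Ω) [IsFiniteMeasure μ] (s : Set Ω) :
    IsBbPositiveFunctional (fun f : Ω → ℝ => ⨍ y in s, f y ∂μ) := by
  simp only [setAverage_eq, smul_eq_mul]
  have h := isBbPositiveFunctional_integral (μ.restrict s)
  refine ⟨fun f g hf hg => ?_, fun c f hf => ?_, fun f hf hf0 => ?_⟩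
  · rw [h.map_add f g hf hg, mul_add]
  · rw [h.map_smul c f hf, mul_left_comm]
  · exact mul_nonneg (inv_nonneg.mpr measureReal_nonneg) (h.nonneg f hf hf0)

namespace IsBbPositiveFunctional

variable {φ : (Ω → ℝ) → ℝ} (hφ : IsBbPositiveFunctional φ)
include hφ

lemma comp {T : (Ω → ℝ) → Ω → ℝ} (hT : IsBbPositiveOperator T) :
    IsBbPositiveFunctional (fun f => φ (T f)) where
  map_add f g hf hg := by rw [hT.map_add f g hf hg, hφ.map_add _ _ (hT.bb f hf) (hT.bb g hg)]
  map_smul c f hf := by rw [hT.map_smul c f hf, hφ.map_smul c _ (hT.bb f hf)]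
  nonneg f hf hf0 := hφ.nonneg _ (hT.bb f hf) (hT.nonneg f hf hf0)

lemma map_sub {f g : Ω → ℝ} (hf : Bb f) (hg : Bb g) : φ (f - g) = φ f - φ g := by
  have h := hφ.map_add (f - g) g (hf.sub hg) hg
  rw [sub_add_cancel] at h
  linarith

lemma mono {f g : Ω → ℝ} (hf : Bb f) (hg : Bb g) (hfg : ∀ x, f x ≤ g x) : φ f ≤ φ g := by
  have := hφ.nonneg (g - f) (hg.sub hf) fun x => sub_nonneg.mpr (hfg x)
  rw [hφ.map_sub hg hf] at this
  linarith

lemma abs_le_mul_one {f : Ω → ℝ} (hf : Bb f) {b : ℝ} (hb : ∀ x, |f x| ≤ b) :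
    |φ f| ≤ b * φ 1 := by
  have h1 : Bb (1 : Ω → ℝ) := Bb.const 1
  have hsmul : ∀ c : ℝ, φ (c • 1) = c * φ 1 := fun c => hφ.map_smul c 1 h1
  rw [abs_le, neg_mul_eq_neg_mul, ← hsmul, ← hsmul]
  exact ⟨hφ.mono (h1.smul _) hf fun x => by simpa using (abs_le.mp (hb x)).1,
    hφ.mono hf (h1.smul _) fun x => by simpa using (abs_le.mp (hb x)).2⟩

lemma map_indicator_nonneg {s : Set Ω} (hs : MeasurableSet s) : 0 ≤ φ (s.indicator 1) :=
  hφ.nonneg _ (Bb.indicator_one hs) fun x => Set.indicator_nonneg (fun _ _ => zero_le_one) x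

lemma map_indicator_union {s t : Set Ω} (hs : MeasurableSet s) (ht : MeasurableSet t)
    (hst : Disjoint s t) :
    φ ((s ∪ t).indicator 1) = φ (s.indicator 1) + φ (t.indicator 1) := by
  rw [Set.indicator_union_of_disjoint hst]
  exact hφ.map_add _ _ (Bb.indicator_one hs) (Bb.indicator_one ht)

end IsBbPositiveFunctional

lemma Bb.exists_simpleFunc_abs_sub_le {f : Ω → ℝ} (hf : Bb f) {ε : ℝ} (hε : 0 < ε) :
    ∃ g : SimpleFunc Ω ℝ, ∀ x, |f x - g x| ≤ ε := by
  obtain ⟨hm, C, hC⟩ := hf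
  have hrange : range (fun x => ε * ⌊f x / ε⌋) ⊆
      (fun j : ℤ => ε * j) '' Icc ⌊-C / ε⌋ ⌊C / ε⌋ := by
    rintro _ ⟨x, rfl⟩
    exact ⟨_, ⟨Int.floor_mono (by gcongr; exact neg_le_of_abs_le (hC x)),
      Int.floor_mono (by gcongr; exact le_of_abs_le (hC x))⟩, rfl⟩
  refine ⟨⟨fun x => ε * ⌊f x / ε⌋,
    fun r => (by fun_prop : Measurable _) (measurableSet_singleton r),
    ((finite_Icc _ _).image _).subset hrange⟩, fun x => ?_⟩
  have hfract : f x - ε * ⌊f x / ε⌋ = ε * Int.fract (f x / ε) := by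
    rw [Int.fract, mul_sub, mul_div_cancel₀ _ hε.ne']
  change |f x - ε * ⌊f x / ε⌋| ≤ ε
  rw [hfract, abs_of_nonneg (mul_nonneg hε.le (Int.fract_nonneg _))]
  exact mul_le_of_le_one_right hε.le (Int.fract_lt_one _).le

namespace IsBbPositiveFunctional

variable {φ : (Ω → ℝ) → ℝ} (hφ : IsBbPositiveFunctional φ)
include hφ

lemma eq_integral_simpleFunc {ν : Measure Ω} [IsFiniteMeasure ν]
    (hν : ∀ s, MeasurableSet s → φ (s.indicator 1) = ν.real s) (g : SimpleFunc Ω ℝ) :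
    φ g = ∫ x, g x ∂ν := by
  induction g using SimpleFunc.induction with
  | @const c s hs =>
    have hg : ⇑(SimpleFunc.piecewise s hs (SimpleFunc.const Ω c) (SimpleFunc.const Ω 0)) =
        c • s.indicator 1 := by
      ext x
      by_cases hx : x ∈ s <;> simp [hx]
    rw [hg, hφ.map_smul c _ (Bb.indicator_one hs), hν _ hs, Pi.smul_def, integral_smul,
      integral_indicator_one hs, smul_eq_mul]
  | add _ hf hg =>
    rw [SimpleFunc.coe_add, hφ.map_add _ _ (SimpleFunc.bb _) (SimpleFunc.bb _), hf, hg]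
    exact (integral_add ((SimpleFunc.bb _).integrable ν) ((SimpleFunc.bb _).integrable ν)).symm

theorem eq_integral {ν : Measure Ω} [IsFiniteMeasure ν]
    (hν : ∀ s, MeasurableSet s → φ (s.indicator 1) = ν.real s) {f : Ω → ℝ} (hf : Bb f) :
    φ f = ∫ x, f x ∂ν := by
  have hint := isBbPositiveFunctional_integral ν
  set K := φ 1 + ∫ x, (1 : Ω → ℝ) x ∂ν
  have key : ∀ δ > 0, |φ f - ∫ x, f x ∂ν| ≤ δ * K := by
    intro δ hδ
    obtain ⟨g, hg⟩ := hf.exists_simpleFunc_abs_sub_le hδ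
    have hfg := hf.sub g.bb
    calc |φ f - ∫ x, f x ∂ν| = |φ (f - g) - ∫ x, (f - g) x ∂ν| := by
          rw [hφ.map_sub hf g.bb, hint.map_sub hf g.bb, hφ.eq_integral_simpleFunc hν g]
          ring_nf
      _ ≤ |φ (f - g)| + |∫ x, (f - g) x ∂ν| := abs_sub _ _
      _ ≤ δ * φ 1 + δ * ∫ x, (1 : Ω → ℝ) x ∂ν :=
          add_le_add (hφ.abs_le_mul_one hfg hg) (hint.abs_le_mul_one hfg hg)
      _ = δ * K := by ring
  have hlim : Tendsto (fun δ => δ * K) (𝓝[>] 0) (𝓝 0) := by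
    simpa using ((tendsto_nhdsWithin_of_tendsto_nhds tendsto_id).mul_const K :
      Tendsto (fun δ : ℝ => δ * K) (𝓝[>] 0) (𝓝 (0 * K)))
  have := ge_of_tendsto hlim (eventually_nhdsWithin_of_forall key)
  exact sub_eq_zero.mp (abs_nonpos_iff.mp this)

end IsBbPositiveFunctional

theorem IsBbPositiveFunctional.exists_measure_eq_integral {φ : (Ω → ℝ) → ℝ}
    (hφ : IsBbPositiveFunctional φ)
    (hφ_tendsto : ∀ ⦃s : ℕ → Set Ω⦄, (∀ n, MeasurableSet (s n)) → Antitone s →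
      ⋂ n, s n = ∅ → Tendsto (fun n => φ ((s n).indicator 1)) atTop (𝓝 0)) :
    ∃ ν : Measure Ω, IsFiniteMeasure ν ∧ ∀ f, Bb f → φ f = ∫ x, f x ∂ν := by
  obtain ⟨ν, hν, hνφ⟩ := exists_isFiniteMeasure_measureReal_eq
    (fun s hs => hφ.map_indicator_nonneg hs) (fun s t hs ht hst => hφ.map_indicator_union hs ht hst)
    hφ_tendsto
  exact ⟨ν, hν, fun f hf => hφ.eq_integral (fun s hs => (hνφ s hs).symm) hf⟩

variable [TopologicalSpace Ω]

theorem tendsto_setAverage_of_continuousAt {ι : Type*} {l : Filter ι} {μ : Measure Ω}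
    {O : ι → Set Ω} {x : Ω} (hO : Tendsto O l (𝓝 x).smallSets)
    (hμO : ∀ i, μ (O i) ≠ 0) (hμO' : ∀ i, μ (O i) ≠ ∞)
    {g : Ω → ℝ} (hg : ContinuousAt g x) (hg_int : ∀ i, IntegrableOn g (O i) μ) :
    Tendsto (fun i => ⨍ y in O i, g y ∂μ) l (𝓝 (g x)) := by
  have hsel : ∀ {y : ι → Ω}, (∀ i, y i ∈ O i) → Tendsto (fun i => g (y i)) l (𝓝 (g x)) :=
    fun hy => hg.tendsto.comp <| tendsto_iff_forall_eventually_mem.mpr fun t ht =>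
      (tendsto_smallSets_iff.mp hO t ht).mono fun i hi => hi (hy i)
  choose y₁ hy₁ hle₁ using fun i => exists_le_setAverage (hμO i) (hμO' i) (hg_int i)
  choose y₂ hy₂ hle₂ using fun i => exists_setAverage_le (hμO i) (hμO' i) (hg_int i)
  exact tendsto_of_tendsto_of_tendsto_of_le_of_le (hsel hy₁) (hsel hy₂) hle₁ hle₂

theorem IsBbPositiveOperator.tendsto_apply_apply_indicator_nhds_zero
    [FirstCountableTopology Ω] [OpensMeasurableSpace Ω] {μ : Measure Ω} [IsFiniteMeasure μ]
    [μ.IsOpenPosMeasure] {T : (Ω → ℝ) → Ω → ℝ} (hT : IsBbPositiveOperator T)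
    (hT_cont : ∀ f, Bb f → Continuous (T f))
    (hT_inv : ∀ f, Bb f → ∫ x, T f x ∂μ = ∫ x, f x ∂μ) (x : Ω)
    {s : ℕ → Set Ω} (hs : ∀ n, MeasurableSet (s n)) (hs_anti : Antitone s)
    (hs_empty : ⋂ n, s n = ∅) :
    Tendsto (fun n => T (T ((s n).indicator 1)) x) atTop (𝓝 0) := by
  obtain ⟨O, hO, hO_basis⟩ := (nhds_basis_opens x).exists_antitone_subbasis
  have hμO i : μ (O i) ≠ 0 := (hO i).2.measure_ne_zero μ ⟨x, (hO i).1⟩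
  have hφ i := ((isBbPositiveFunctional_setAverage μ (O i)).comp hT).comp hT
  let F i (A : Set Ω) := ⨍ y in O i, T (T (A.indicator 1)) y ∂μ
  have hF_le i A (hA : MeasurableSet A) : |F i A| ≤ (μ.real (O i))⁻¹ * μ.real A := by
    have h1 := Bb.indicator_one hA
    have hTT_nonneg y :=
      (((isBbPositiveFunctional_apply y).comp hT).comp hT).map_indicator_nonneg hA
    rw [abs_of_nonneg ((hφ i).map_indicator_nonneg hA), setAverage_eq, smul_eq_mul]
    refine mul_le_mul_of_nonneg_left ?_ (inv_nonneg.mpr measureReal_nonneg)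
    calc ∫ y in O i, T (T (A.indicator 1)) y ∂μ ≤ ∫ y, T (T (A.indicator 1)) y ∂μ :=
          setIntegral_le_integral ((hT.bb _ (hT.bb _ h1)).integrable μ) (.of_forall hTT_nonneg)
      _ = μ.real A := by rw [hT_inv _ (hT.bb _ h1), hT_inv _ h1, integral_indicator_one hA]
  have hF_tendsto A (hA : MeasurableSet A) :
      Tendsto (F · A) atTop (𝓝 (T (T (A.indicator 1)) x)) :=
    tendsto_setAverage_of_continuousAt hO_basis.tendsto_smallSets hμO (fun _ => measure_ne_top _ _)
      (hT_cont _ (hT.bb _ (Bb.indicator_one hA))).continuousAt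
      fun _ => ((hT.bb _ (hT.bb _ (Bb.indicator_one hA))).integrable μ).integrableOn
  exact tendsto_of_forall_measureReal_lt_abs_le
    (fun ε hε => exists_forall_measureReal_lt_abs_le_of_tendsto
      (fun i _ _ hs ht hst => (hφ i).map_indicator_union hs ht hst) hF_le hF_tendsto hε)
    hs hs_anti hs_empty

end

theorem stmt_5_general {Ω : Type*} [TopologicalSpace Ω] [SecondCountableTopology Ω]
    [MeasurableSpace Ω] [BorelSpace Ω]
    (μ : Measure Ω) [IsFiniteMeasure μ]
    (hμpos : ∀ U : Set Ω, IsOpen U → U.Nonempty → 0 < μ U)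
    (T : (Ω → ℝ) → (Ω → ℝ))
    (hTBb : ∀ f, Bb f → Bb (T f))
    (hadd : ∀ f g, Bb f → Bb g → T (f + g) = T f + T g)
    (hsmul : ∀ (c : ℝ) (f), Bb f → T (c • f) = c • T f)
    (hpos : ∀ f, Bb f → (∀ x, 0 ≤ f x) → ∀ x, 0 ≤ T f x)
    (hSF : ∀ f, Bb f → Continuous (T f))
    (hinv : ∀ f, Bb f → ∫ x, T f x ∂μ = ∫ x, f x ∂μ) :
    ∀ x : Ω, ∃ μx : Measure Ω, IsFiniteMeasure μx ∧
      ∀ f, Bb f → T (T f) x = ∫ y, f y ∂μx := by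
  intro x
  have : μ.IsOpenPosMeasure := ⟨fun U hU hne => (hμpos U hU hne).ne'⟩
  have hT : IsBbPositiveOperator T := ⟨hTBb, hadd, hsmul, hpos⟩
  exact (((isBbPositiveFunctional_apply x).comp hT).comp hT).exists_measure_eq_integral
    fun _ hs hs_anti hs_empty =>
      hT.tendsto_apply_apply_indicator_nhds_zero hSF hinv x hs hs_anti hs_empty

theorem stmt_5 {Ω : Type*} [TopologicalSpace Ω] [T2Space Ω] [SecondCountableTopology Ω]
    [MeasurableSpace Ω] [BorelSpace Ω]
    (μ : Measure Ω) [IsFiniteMeasure μ]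
    (hμpos : ∀ U : Set Ω, IsOpen U → U.Nonempty → 0 < μ U)
    (T : (Ω → ℝ) → (Ω → ℝ))
    (hTBb : ∀ f, Bb f → Bb (T f))
    (hadd : ∀ f g, Bb f → Bb g → T (f + g) = T f + T g)
    (hsmul : ∀ (c : ℝ) (f), Bb f → T (c • f) = c • T f)
    (hpos : ∀ f, Bb f → (∀ x, 0 ≤ f x) → ∀ x, 0 ≤ T f x)
    (hSF : ∀ f, Bb f → Continuous (T f))
    (hker : ∃ k : Ω → Ω → ℝ, Measurable (Function.uncurry k) ∧
      ∀ f, Bb f → (∀ x, Integrable (fun y => k x y * f y) μ) ∧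
        ∀ᵐ x ∂μ, T f x = ∫ y, k x y * f y ∂μ)
    (hinv : ∀ f, Bb f → ∫ x, T f x ∂μ = ∫ x, f x ∂μ) :
    ∀ x : Ω, ∃ μx : Measure Ω, IsFiniteMeasure μx ∧
      ∀ f, Bb f → T (T f) x = ∫ y, f y ∂μx :=
  stmt_5_general μ hμpos T hTBb hadd hsmul hpos hSF hinv
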